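/- Let μ ∈ ℝ^d, let Σ be a d×d symmetric positive-definite matrix, let γ ≥ 0, and let X ∼ N(μ, Σ) be a Gaussian random vector, with u(x) = exp(−½(x−μ)ᵀΣ⁻¹(x−μ)). Then the population γ-Stein estimating equations for the Gaussian model hold at the true parameters: E[u(X)^γ · Σ⁻¹(X − μ)] = 0 and E[u(X)^γ · ((γ+1)Σ⁻¹(X − μ)(X − μ)ᵀ − I_d)] = 0 (the zero d×d matrix). -/

import Mathlib

/-!
With `y = x - μ` and `A = (γ + 1) Σ⁻¹`, the weight `u · u^γ` is `exp (-½ yᵀ A y)`, an even function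
of `y`, so the first equation integrates an odd function. For the second, write `A = Bᵀ B` and
substitute `y = B⁻¹ z`: the weight becomes the standard Gaussian `exp (-|z|²/2)`, the integrand
becomes `(Bᵀ)ᵢ·z (B⁻¹)ⱼ·z - δᵢⱼ`, and the standard second moments
`∫ exp (-|z|²/2) (a·z)(b·z) dz = (a·b) (2π)^(d/2)` turn it into `(B⁻¹ B)ⱼᵢ - δᵢⱼ = 0`.
-/

open MeasureTheory Real Matrix

/-- Unnormalized Gaussian density `u(x) = exp(−½ (x−μ)ᵀ Σ⁻¹ (x−μ))`. -/
noncomputable def gaussU {d : ℕ} (μv : Fin d → ℝ) (S : Matrix (Fin d) (Fin d) ℝ)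
    (x : Fin d → ℝ) : ℝ :=
  Real.exp (-(1 / 2 : ℝ) * ((x - μv) ⬝ᵥ (S⁻¹ *ᵥ (x - μv))))

theorem integral_eq_zero_of_odd {G E : Type*} [MeasurableSpace G] [AddGroup G] [MeasurableNeg G]
    [NormedAddCommGroup E] [NormedSpace ℝ E] (μ : Measure G) [μ.IsNegInvariant] {f : G → E}
    (hf : f.Odd) : ∫ x, f x ∂μ = 0 := by
  have h := integral_neg_eq_self f μ
  rw [integral_congr_ae (.of_forall hf), integral_neg] at h
  have h2 : (2 : ℝ) • ∫ x, f x ∂μ = 0 := by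
    rw [two_smul]
    nth_rw 1 [← h]
    exact neg_add_cancel _
  exact (smul_eq_zero.mp h2).resolve_left two_ne_zero

theorem integrable_pow_mul_exp_neg_half_sq (n : ℕ) :
    Integrable fun t : ℝ => t ^ n * exp (-(1 / 2) * t ^ 2) := by
  simpa using integrable_rpow_mul_exp_neg_mul_sq (b := 1 / 2) (by norm_num) (s := n)
    (by linarith [n.cast_nonneg (α := ℝ)])

theorem integral_exp_neg_half_sq : ∫ t : ℝ, exp (-(1 / 2) * t ^ 2) = √(2 * π) := by
  rw [integral_gaussian, div_div_eq_mul_div, div_one, mul_comm]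

theorem integral_mul_exp_neg_half_sq : ∫ t : ℝ, t * exp (-(1 / 2) * t ^ 2) = 0 :=
  integral_eq_zero_of_odd volume fun t => by simp

open ProbabilityTheory in
theorem integral_sq_mul_exp_neg_half_sq :
    ∫ t : ℝ, t ^ 2 * exp (-(1 / 2) * t ^ 2) = √(2 * π) := by
  have h := variance_of_integral_eq_zero (X := id) (μ := gaussianReal 0 1) aemeasurable_id
    (by simp)
  rw [variance_id_gaussianReal, integral_gaussianReal_eq_integral_smul one_ne_zero] at h
  simp only [gaussianPDFReal, smul_eq_mul, id, NNReal.coe_one, mul_assoc, integral_const_mul,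
    mul_one, sub_zero] at h
  rw [eq_inv_mul_iff_mul_eq₀ (by positivity), mul_one] at h
  rw [h]
  congr 1 with t
  ring_nf

section StandardGaussian

variable {ι : Type*} [Fintype ι]

theorem exp_neg_half_dotProduct_self_mul_prod_pow (e : ι → ℕ) (z : ι → ℝ) :
    exp (-(1 / 2) * (z ⬝ᵥ z)) * ∏ m, z m ^ e m = ∏ m, z m ^ e m * exp (-(1 / 2) * z m ^ 2) := by
  rw [Finset.prod_mul_distrib, mul_comm, ← exp_sum, dotProduct, Finset.mul_sum]
  simp only [sq]

theorem integrable_exp_neg_half_dotProduct_self_mul_prod_pow (e : ι → ℕ) :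
    Integrable fun z : ι → ℝ => exp (-(1 / 2) * (z ⬝ᵥ z)) * ∏ m, z m ^ e m := by
  simp_rw [exp_neg_half_dotProduct_self_mul_prod_pow]
  exact Integrable.fintype_prod fun m => integrable_pow_mul_exp_neg_half_sq (e m)

theorem integral_exp_neg_half_dotProduct_self_mul_prod_pow (e : ι → ℕ) :
    ∫ z : ι → ℝ, exp (-(1 / 2) * (z ⬝ᵥ z)) * ∏ m, z m ^ e m
      = ∏ m, ∫ t : ℝ, t ^ e m * exp (-(1 / 2) * t ^ 2) := by
  simp_rw [exp_neg_half_dotProduct_self_mul_prod_pow]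
  exact integral_fintype_prod_volume_eq_prod (fun m t => t ^ e m * exp (-(1 / 2) * t ^ 2))

theorem prod_pow_ite_add_ite [DecidableEq ι] (k l : ι) (z : ι → ℝ) :
    ∏ m, z m ^ ((if m = k then 1 else 0) + (if m = l then 1 else 0)) = z k * z l := by
  simp only [pow_add, Finset.prod_mul_distrib, pow_ite, pow_one, pow_zero,
    Finset.prod_ite_eq', Finset.mem_univ, if_true]

theorem integrable_exp_neg_half_dotProduct_self_mul_mul (k l : ι) :
    Integrable fun z : ι → ℝ => exp (-(1 / 2) * (z ⬝ᵥ z)) * (z k * z l) := by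
  classical
  simpa only [prod_pow_ite_add_ite] using integrable_exp_neg_half_dotProduct_self_mul_prod_pow
    fun m => (if m = k then 1 else 0) + (if m = l then 1 else 0)

theorem integral_exp_neg_half_dotProduct_self_mul_mul [DecidableEq ι] (k l : ι) :
    ∫ z : ι → ℝ, exp (-(1 / 2) * (z ⬝ᵥ z)) * (z k * z l)
      = (1 : Matrix ι ι ℝ) k l * √(2 * π) ^ Fintype.card ι := by
  simp_rw [← prod_pow_ite_add_ite k l, integral_exp_neg_half_dotProduct_self_mul_prod_pow]
  rcases eq_or_ne k l with rfl | hkl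
  · rw [one_apply_eq, one_mul, ← Finset.card_univ, ← Finset.prod_const]
    refine Finset.prod_congr rfl fun m _ => ?_
    split_ifs
    · exact integral_sq_mul_exp_neg_half_sq
    · simpa only [add_zero, pow_zero, one_mul] using integral_exp_neg_half_sq
  · rw [one_apply_ne hkl, zero_mul]
    refine Finset.prod_eq_zero (Finset.mem_univ k) ?_
    simpa only [↓reduceIte, if_neg hkl, add_zero, pow_one] using integral_mul_exp_neg_half_sq

theorem integrable_exp_neg_half_dotProduct_self :
    Integrable fun z : ι → ℝ => exp (-(1 / 2) * (z ⬝ᵥ z)) := by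
  simpa only [Pi.zero_apply, pow_zero, Finset.prod_const_one, mul_one]
    using integrable_exp_neg_half_dotProduct_self_mul_prod_pow (ι := ι) 0

theorem integral_exp_neg_half_dotProduct_self :
    ∫ z : ι → ℝ, exp (-(1 / 2) * (z ⬝ᵥ z)) = √(2 * π) ^ Fintype.card ι := by
  simpa only [Pi.zero_apply, pow_zero, Finset.prod_const_one, mul_one, one_mul,
    integral_exp_neg_half_sq, Finset.prod_const, Finset.card_univ]
    using integral_exp_neg_half_dotProduct_self_mul_prod_pow (ι := ι) 0

theorem exp_neg_half_dotProduct_self_mul_dotProduct_mul_dotProduct (a b z : ι → ℝ) :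
    exp (-(1 / 2) * (z ⬝ᵥ z)) * ((a ⬝ᵥ z) * (b ⬝ᵥ z))
      = ∑ k, ∑ l, a k * b l * (exp (-(1 / 2) * (z ⬝ᵥ z)) * (z k * z l)) := by
  have hab : (a ⬝ᵥ z) * (b ⬝ᵥ z) = ∑ k, ∑ l, a k * b l * (z k * z l) := by
    simp only [dotProduct, Finset.sum_mul_sum]
    exact Finset.sum_congr rfl fun k _ => Finset.sum_congr rfl fun l _ => by ring
  simp only [hab, Finset.mul_sum]
  exact Finset.sum_congr rfl fun k _ => Finset.sum_congr rfl fun l _ => by ring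

theorem integrable_exp_neg_half_dotProduct_self_mul_dotProduct_mul_dotProduct (a b : ι → ℝ) :
    Integrable fun z : ι → ℝ => exp (-(1 / 2) * (z ⬝ᵥ z)) * ((a ⬝ᵥ z) * (b ⬝ᵥ z)) := by
  simp_rw [exp_neg_half_dotProduct_self_mul_dotProduct_mul_dotProduct]
  exact integrable_finsetSum _ fun k _ => integrable_finsetSum _ fun l _ =>
    (integrable_exp_neg_half_dotProduct_self_mul_mul k l).const_mul _

theorem integral_exp_neg_half_dotProduct_self_mul_dotProduct_mul_dotProduct (a b : ι → ℝ) :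
    ∫ z : ι → ℝ, exp (-(1 / 2) * (z ⬝ᵥ z)) * ((a ⬝ᵥ z) * (b ⬝ᵥ z))
      = (a ⬝ᵥ b) * √(2 * π) ^ Fintype.card ι := by
  classical
  simp_rw [exp_neg_half_dotProduct_self_mul_dotProduct_mul_dotProduct]
  rw [integral_finsetSum _ fun k _ => integrable_finsetSum _ fun l _ =>
    (integrable_exp_neg_half_dotProduct_self_mul_mul k l).const_mul _]
  simp_rw [integral_finsetSum _ fun l _ =>
    (integrable_exp_neg_half_dotProduct_self_mul_mul _ l).const_mul _, integral_const_mul,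
    integral_exp_neg_half_dotProduct_self_mul_mul, one_apply, ite_mul, one_mul, zero_mul,
    mul_ite, mul_zero, Finset.sum_ite_eq, Finset.mem_univ, if_true, dotProduct, Finset.sum_mul]

end StandardGaussian

theorem integral_comp_mulVec {ι : Type*} [Fintype ι] [DecidableEq ι] {M : Matrix ι ι ℝ}
    (hM : IsUnit M) (f : (ι → ℝ) → ℝ) :
    ∫ z, f (M *ᵥ z) = |M.det|⁻¹ * ∫ y, f y := by
  let _ := hM.invertible
  have hemb : MeasurableEmbedding (toLin' M) :=
    (M.toLinearEquiv' ‹_›).toContinuousLinearEquiv.toHomeomorph.measurableEmbedding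
  have hdet : M.det ≠ 0 := ((isUnit_iff_isUnit_det M).mp hM).ne_zero
  simp_rw [← toLin'_apply M]
  rw [← hemb.integral_map, Real.map_matrix_volume_pi_eq_smul_volume_pi hdet,
    integral_smul_measure, ENNReal.toReal_ofReal (abs_nonneg _), abs_inv, smul_eq_mul]

open scoped MatrixOrder in
theorem Matrix.PosDef.exists_isUnit_eq_transpose_mul_self {ι : Type*} [Fintype ι] [DecidableEq ι]
    {A : Matrix ι ι ℝ} (hA : A.PosDef) : ∃ B : Matrix ι ι ℝ, IsUnit B ∧ A = Bᵀ * B := by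
  obtain ⟨B, hB, rfl⟩ :=
    CStarAlgebra.isStrictlyPositive_iff_eq_star_mul_self.mp hA.isStrictlyPositive
  exact ⟨B, hB, rfl⟩

theorem integral_exp_neg_half_dotProduct_mulVec_mul_mulVec_mul_sub_one {ι : Type*} [Fintype ι]
    [DecidableEq ι] {A : Matrix ι ι ℝ} (hA : A.PosDef) (i j : ι) :
    ∫ y : ι → ℝ, exp (-(1 / 2) * (y ⬝ᵥ (A *ᵥ y))) * ((A *ᵥ y) i * y j - (1 : Matrix ι ι ℝ) i j)
      = 0 := by
  obtain ⟨B, hB, rfl⟩ := hA.exists_isUnit_eq_transpose_mul_self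
  have hBinv : IsUnit B⁻¹ := (isUnit_nonsing_inv_iff).mpr hB
  set f := fun y : ι → ℝ =>
    exp (-(1 / 2) * (y ⬝ᵥ ((Bᵀ * B) *ᵥ y))) * (((Bᵀ * B) *ᵥ y) i * y j - (1 : Matrix ι ι ℝ) i j)
  have hBBinv : Bᵀ * B * B⁻¹ = Bᵀ :=
    mul_nonsing_inv_cancel_right _ _ ((isUnit_iff_isUnit_det B).mp hB)
  have hquad (z : ι → ℝ) : B⁻¹ *ᵥ z ⬝ᵥ ((Bᵀ * B) *ᵥ (B⁻¹ *ᵥ z)) = z ⬝ᵥ z := by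
    rw [mulVec_mulVec, hBBinv, dotProduct_mulVec, vecMul_transpose, mulVec_mulVec,
      mul_nonsing_inv _ ((isUnit_iff_isUnit_det B).mp hB), one_mulVec]
  have hlin (z : ι → ℝ) : ((Bᵀ * B) *ᵥ (B⁻¹ *ᵥ z)) i = (fun k => B k i) ⬝ᵥ z := by
    rw [mulVec_mulVec, hBBinv]
    rfl
  have hinv (z : ι → ℝ) : (B⁻¹ *ᵥ z) j = (fun k => B⁻¹ j k) ⬝ᵥ z := rfl
  have hdot : (fun k => B k i) ⬝ᵥ (fun k => B⁻¹ j k) = (1 : Matrix ι ι ℝ) i j := by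
    rw [dotProduct_comm, ← show (B⁻¹ * B) j i = _ from mul_apply',
      nonsing_inv_mul _ ((isUnit_iff_isUnit_det B).mp hB), ← transpose_apply (1 : Matrix ι ι ℝ),
      transpose_one]
  have hcomp : ∫ z, f (B⁻¹ *ᵥ z) = 0 := by
    simp only [f, hquad, hlin, hinv, mul_sub]
    rw [integral_sub (integrable_exp_neg_half_dotProduct_self_mul_dotProduct_mul_dotProduct _ _)
      (integrable_exp_neg_half_dotProduct_self.mul_const _),
      integral_exp_neg_half_dotProduct_self_mul_dotProduct_mul_dotProduct, integral_mul_const,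
      integral_exp_neg_half_dotProduct_self, hdot]
    ring
  rw [integral_comp_mulVec hBinv] at hcomp
  exact (mul_eq_zero.mp hcomp).resolve_left
    (inv_ne_zero (abs_ne_zero.mpr ((isUnit_iff_isUnit_det _).mp hBinv).ne_zero))

theorem gaussU_add_right {d : ℕ} (μv y : Fin d → ℝ) (S : Matrix (Fin d) (Fin d) ℝ) :
    gaussU μv S (y + μv) = exp (-(1 / 2) * (y ⬝ᵥ (S⁻¹ *ᵥ y))) := by
  rw [gaussU, add_sub_cancel_right]

/-- the population `γ`-Stein estimating equations for the Gaussian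
model hold at the true parameters: for `X ∼ N(μ, Σ)` (density `u/∫u`),
`E[u(X)^γ Σ⁻¹(X−μ)] = 0` and `E[u(X)^γ ((γ+1)Σ⁻¹(X−μ)(X−μ)ᵀ − I_d)] = 0`. -/
theorem gaussian_gamma_stein_estimating_equations
    (d : ℕ) (μv : Fin d → ℝ) (S : Matrix (Fin d) (Fin d) ℝ) (hS : S.PosDef)
    (γ : ℝ) (hγ : 0 ≤ γ) :
    (∀ i, ∫ x : Fin d → ℝ,
        (gaussU μv S x / ∫ y : Fin d → ℝ, gaussU μv S y) * gaussU μv S x ^ γ *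
          (S⁻¹ *ᵥ (x - μv)) i = 0)
    ∧ ∀ i j, ∫ x : Fin d → ℝ,
        (gaussU μv S x / ∫ y : Fin d → ℝ, gaussU μv S y) * gaussU μv S x ^ γ *
          ((γ + 1) * (S⁻¹ *ᵥ (x - μv)) i * (x - μv) j
            - (1 : Matrix (Fin d) (Fin d) ℝ) i j) = 0 := by
  set Z := ∫ y : Fin d → ℝ, gaussU μv S y
  have hshift (F : (Fin d → ℝ) → ℝ) : ∫ x, F x = ∫ y, F (y + μv) :=
    (integral_add_right_eq_self F μv).symm
  refine ⟨fun i => ?_, fun i j => ?_⟩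
  · rw [hshift]
    refine integral_eq_zero_of_odd volume fun y => ?_
    simp only [add_sub_cancel_right, gaussU_add_right, mulVec_neg, dotProduct_neg, neg_dotProduct,
      neg_neg, Pi.neg_apply]
    ring
  · set A := (γ + 1) • S⁻¹
    have hA : A.PosDef := hS.inv.smul (by linarith)
    have hintegrand (y : Fin d → ℝ) :
        (gaussU μv S (y + μv) / Z) * gaussU μv S (y + μv) ^ γ *
            ((γ + 1) * (S⁻¹ *ᵥ (y + μv - μv)) i * (y + μv - μv) j - (1 : Matrix _ _ ℝ) i j)
          = Z⁻¹ *
            (exp (-(1 / 2) * (y ⬝ᵥ (A *ᵥ y))) * ((A *ᵥ y) i * y j - (1 : Matrix _ _ ℝ) i j)) := by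
      simp only [A, add_sub_cancel_right, gaussU_add_right, smul_mulVec, dotProduct_smul,
        Pi.smul_apply, smul_eq_mul, ← exp_mul, div_eq_inv_mul]
      rw [mul_assoc Z⁻¹, ← exp_add, mul_assoc Z⁻¹]
      congr 3
      ring
    rw [hshift]
    simp only [hintegrand]
    rw [integral_const_mul, integral_exp_neg_half_dotProduct_mulVec_mul_mulVec_mul_sub_one hA,
      mul_zero]
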